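/- arXiv:1306.6548 — 7 statements merged into one kernel-verified Lean document; each statement's English description precedes it below -/
import Mathlib

section
/- For every integer m ≥ 2, the polynomial F_m(x) = Σ_{j=0}^{m} V_{2j}(x) satisfies F_m(x) ≥ 0 for all real x. -/
/-!
Since `U_{m+n} = U_m U_n - U_{m-1} U_{n-1}`, the even polynomials are differences of squares,
`U_{2j} = U_j² - U_{j-1}²`, so the sum `∑_{j ≤ m} U_{2j}` telescopes to `U_m²` and `F_m(x) = U_m(x/2)²`.
-/

open Real

noncomputable def chebV (m : ℕ) (x : ℝ) : ℝ := (Polynomial.Chebyshev.U ℝ m).eval (x / 2)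

/-- `F_m(x) = ∑_{j=0}^m V_{2j}(x)`. -/
noncomputable def chebF (m : ℕ) (x : ℝ) : ℝ := ∑ j ∈ Finset.range (m + 1), chebV (2 * j) x

namespace Polynomial.Chebyshev

variable (R : Type*) [CommRing R]

theorem U_add (m n : ℤ) : U R (m + n) = U R m * U R n - U R (m - 1) * U R (n - 1) := by
  induction n using Chebyshev.induct with
  | zero => simp
  | one => simp [U_add_one R m, mul_comm]
  | add_two n ih1 ih0 =>
    linear_combination (norm := ring_nf) U_add_two R (m + n) + 2 * X * ih1 - ih0 -
      U R m * U_add_two R n + U R (m - 1) * U_add_one R n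
  | neg_add_one n ih0 ih1 =>
    linear_combination (norm := ring_nf) U_sub_one R (m - n) + 2 * X * ih0 - ih1 -
      U R m * U_sub_one R (-n) + U R (m - 1) * U_sub_one R (-n - 1)

theorem U_two_mul (n : ℤ) : U R (2 * n) = U R n ^ 2 - U R (n - 1) ^ 2 := by
  rw [two_mul, U_add]
  ring

theorem sum_range_U_two_mul (m : ℕ) :
    ∑ j ∈ Finset.range (m + 1), U R (2 * j) = U R m ^ 2 := by
  induction m with
  | zero => simp
  | succ m ih =>
    rw [Finset.sum_range_succ, ih, U_two_mul]
    push_cast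
    ring_nf

end Polynomial.Chebyshev

theorem chebF_eq_sq (m : ℕ) (x : ℝ) : chebF m x = (Polynomial.Chebyshev.U ℝ m).eval (x / 2) ^ 2 := by
  rw [← Polynomial.eval_pow, ← Polynomial.Chebyshev.sum_range_U_two_mul, Polynomial.eval_finsetSum]
  simp [chebF, chebV]

theorem chebF_nonneg_general (m : ℕ) (x : ℝ) : 0 ≤ chebF m x := by
  rw [chebF_eq_sq]
  positivity

/-- For `m ≥ 2`, `F_m(x) ≥ 0` for all real `x`. -/
theorem chebF_nonneg (m : ℕ) (hm : 2 ≤ m) (x : ℝ) : 0 ≤ chebF m x :=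
  chebF_nonneg_general m x
end

section
/- For any real s > 0 and any integer j ≥ 0, the polynomial x ↦ V_j(x + s) can be written as Σ_{i=0}^{j} ε_{j,i}(s) V_i(x), where each coefficient ε_{j,i}(s) is nonnegative, the leading coefficient satisfies ε_{j,j}(s) = 1, and the constant-term coefficient satisfies ε_{j,0}(s) > 0 whenever j ≥ 1. -/
open Real

noncomputable def chV (n : ℤ) (x : ℝ) : ℝ := (Polynomial.Chebyshev.U ℝ n).eval (x / 2)

lemma chV_zero (x : ℝ) : chV 0 x = 1 := by simp [chV]

lemma chV_one (x : ℝ) : chV 1 x = x := by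
  simp [chV, Polynomial.Chebyshev.U_one]; ring

lemma chV_neg_one (x : ℝ) : chV (-1) x = 0 := by
  simp [chV, Polynomial.Chebyshev.U_neg_one]

lemma chV_rec (n : ℤ) (x : ℝ) : x * chV n x = chV (n+1) x + chV (n-1) x := by
  have h := Polynomial.Chebyshev.U_add_two ℝ (n-1)
  rw [show n - 1 + 2 = n + 1 by ring, show n - 1 + 1 = n by ring] at h
  have h2 := congrArg (Polynomial.eval (x/2)) h
  simp only [Polynomial.eval_sub, Polynomial.eval_mul, Polynomial.eval_ofNat,
    Polynomial.eval_X] at h2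
  simp only [chV]
  rw [h2]; ring

noncomputable def E (s : ℝ) : ℕ → ℤ → ℝ
  | 0, i => if i = 0 then 1 else 0
  | 1, i => if i = 0 then s else if i = 1 then 1 else 0
  | (j+2), i => if i < 0 then 0 else
      E s (j+1) (i-1) + E s (j+1) (i+1) + s * E s (j+1) i - E s j i

lemma E_neg (s : ℝ) : ∀ (j : ℕ) (i : ℤ), i < 0 → E s j i = 0
  | 0, i, hi => by simp [E, hi.ne]
  | 1, i, hi => by
    have h1 : i ≠ 0 := by omega
    have h2 : i ≠ 1 := by omega
    simp [E, h1, h2]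
  | (j+2), i, hi => by simp [E, hi]

lemma E_rec (s : ℝ) (j : ℕ) (i : ℤ) (h : 0 ≤ i) :
    E s (j+2) i = E s (j+1) (i-1) + E s (j+1) (i+1) + s * E s (j+1) i - E s j i := by
  simp [E, not_lt.2 h]

lemma twoStep {P : ℕ → Prop} (h0 : P 0) (h1 : P 1)
    (h : ∀ j, P j → P (j+1) → P (j+2)) : ∀ j, P j := by
  have key : ∀ j, P j ∧ P (j+1) := by
    intro j
    induction j with
    | zero => exact ⟨h0, h1⟩
    | succ n ih => exact ⟨ih.2, h n ih.1 ih.2⟩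
  exact fun j => (key j).1

lemma E_vanish (s : ℝ) : ∀ (j : ℕ) (i : ℤ), (j : ℤ) < i → E s j i = 0 := by
  refine twoStep ?_ ?_ ?_
  · intro i hi
    have h1 : i ≠ 0 := by push_cast at hi; omega
    simp [E, h1]
  · intro i hi
    have h1 : i ≠ 0 := by push_cast at hi; omega
    have h2 : i ≠ 1 := by push_cast at hi; omega
    simp [E, h1, h2]
  · intro j ih0 ih1 i hi
    have hi0 : (0:ℤ) ≤ i := by omega
    rw [E_rec s j i hi0, ih1 (i-1) (by push_cast; omega), ih1 (i+1) (by push_cast; omega),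
      ih1 i (by push_cast; omega), ih0 i (by push_cast; omega)]
    ring

lemma E_nonneg_dom (s : ℝ) (hs : 0 ≤ s) :
    ∀ j, (∀ i, 0 ≤ E s j i) ∧ (∀ i, 0 ≤ E s (j+1) i) ∧ (∀ i, E s j i ≤ E s (j+1) (i+1)) := by
  intro j
  induction j with
  | zero =>
    refine ⟨?_, ?_, ?_⟩
    · intro i; simp only [E]; split <;> norm_num
    · intro i; simp only [E]; split
      · exact hs
      · split <;> norm_num
    · intro i
      rcases eq_or_ne i 0 with rfl | hi
      · simp [E]
      · have h1 : (0:ℝ) ≤ E s 1 (i+1) := by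
          simp only [E]; split
          · exact hs
          · split <;> norm_num
        simpa [E, if_neg hi] using h1
  | succ j ih =>
    obtain ⟨hnn, hnn1, hdom⟩ := ih
    have hnn2 : ∀ i, 0 ≤ E s (j+2) i := by
      intro i
      rcases lt_or_ge i 0 with hi | hi
      · rw [E_neg s _ i hi]
      · rw [E_rec s j i hi]
        have h1 := hnn1 (i-1)
        have h2 := hdom i
        have h3 := mul_nonneg hs (hnn1 i)
        linarith
    refine ⟨hnn1, hnn2, ?_⟩
    intro i
    rcases lt_or_ge (i+1) 0 with hi | hi
    · rw [E_neg s _ _ hi, E_neg s _ i (by omega)]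
    · rw [E_rec s j (i+1) hi]
      have h2 := hdom (i+1)
      have h3 := mul_nonneg hs (hnn1 (i+1))
      rw [show i + 1 + 1 = i + 2 by ring] at h2
      rw [show i + 1 - 1 = i by ring, show i + 1 + 1 = i + 2 by ring]
      linarith

lemma E_diag (s : ℝ) (hs : 0 ≤ s) : ∀ j : ℕ, E s j (j : ℤ) = 1 := by
  refine twoStep ?_ ?_ ?_
  · simp [E]
  · simp [E]
  · intro j ih0 ih1
    have hc : ((j:ℤ)+2 : ℤ) = ((j+2 : ℕ) : ℤ) := by push_cast; ring
    rw [show ((j+2:ℕ):ℤ) = (j:ℤ)+2 by push_cast; ring, E_rec s j _ (by omega)]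
    rw [show (j:ℤ)+2-1 = ((j+1:ℕ):ℤ) by push_cast; ring] at *
    rw [E_vanish s (j+1) ((j:ℤ)+2+1) (by push_cast; omega),
      E_vanish s (j+1) ((j:ℤ)+2) (by push_cast; omega),
      E_vanish s j ((j:ℤ)+2) (by push_cast; omega), ih1]
    ring

lemma E_zero_pos (s : ℝ) (hs : 0 < s) : ∀ j : ℕ, 0 < E s (j+1) 0 := by
  intro j
  induction j with
  | zero => simp [E, hs]
  | succ j ih =>
    rw [E_rec s j 0 le_rfl]
    have h1 := (E_nonneg_dom s hs.le j).2.2 0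
    have h2 := mul_pos hs ih
    rw [show (0:ℤ)-1 = -1 by ring, E_neg s (j+1) (-1) (by omega)]
    rw [show (0:ℤ)+1 = 1 by ring] at *
    linarith

lemma E_eval (s : ℝ) : ∀ (j : ℕ) (x : ℝ),
    chV (j : ℤ) (x + s) = ∑ i ∈ Finset.range (j+1), E s j (i : ℤ) * chV (i : ℤ) x := by
  refine twoStep ?_ ?_ ?_
  · intro x; simp [chV_zero, E]
  · intro x
    rw [Finset.sum_range_succ, Finset.sum_range_succ, Finset.sum_range_zero]
    push_cast
    simp [chV_zero, chV_one, E]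
    ring
  · intro j ih0 ih1 x
    have hL : chV ((j:ℤ)+2) (x+s) = (x+s) * chV ((j:ℤ)+1) (x+s) - chV (j:ℤ) (x+s) := by
      have h := chV_rec ((j:ℤ)+1) (x+s)
      rw [show (j:ℤ)+1+1 = (j:ℤ)+2 by ring, show (j:ℤ)+1-1 = (j:ℤ) by ring] at h
      linarith
    have hcast2 : ((j+2:ℕ):ℤ) = (j:ℤ)+2 := by push_cast; ring
    have hcast1 : ((j+1:ℕ):ℤ) = (j:ℤ)+1 := by push_cast; ring
    rw [hcast2, hL]
    rw [ih0 x]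
    rw [hcast1] at ih1
    rw [ih1 x]
    -- RHS: expand E (j+2) via recurrence
    have key : ∀ i ∈ Finset.range (j+3), E s (j+2) (i:ℤ) * chV (i:ℤ) x
        = E s (j+1) ((i:ℤ)-1) * chV (i:ℤ) x + E s (j+1) ((i:ℤ)+1) * chV (i:ℤ) x
          + s * (E s (j+1) (i:ℤ) * chV (i:ℤ) x) - E s j (i:ℤ) * chV (i:ℤ) x := by
      intro i _
      rw [E_rec s j (i:ℤ) (Int.ofNat_nonneg i)]
      ring
    rw [show j+2+1 = j+3 from rfl, Finset.sum_congr rfl key]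
    rw [Finset.sum_sub_distrib, Finset.sum_add_distrib, Finset.sum_add_distrib,
      ← Finset.mul_sum]
    have hA : (∑ i ∈ Finset.range (j+3), E s (j+1) ((i:ℤ)-1) * chV (i:ℤ) x)
        = ∑ i ∈ Finset.range (j+2), E s (j+1) (i:ℤ) * chV ((i:ℤ)+1) x := by
      rw [Finset.sum_range_succ']
      rw [show ((0:ℕ):ℤ) = 0 from rfl, show (0:ℤ)-1 = -1 by ring,
        E_neg s (j+1) (-1) (by omega), zero_mul, add_zero]
      refine Finset.sum_congr rfl fun i _ => ?_
      push_cast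
      rw [show (i:ℤ)+1-1 = (i:ℤ) by ring]
    have hB2 : (∑ i ∈ Finset.range (j+2), E s (j+1) (i:ℤ) * chV ((i:ℤ)-1) x)
        = ∑ i ∈ Finset.range (j+1), E s (j+1) ((i:ℤ)+1) * chV (i:ℤ) x := by
      rw [Finset.sum_range_succ']
      rw [show ((0:ℕ):ℤ) = 0 from rfl, show (0:ℤ)-1 = -1 by ring, chV_neg_one,
        mul_zero, add_zero]
      refine Finset.sum_congr rfl fun i _ => ?_
      push_cast
      rw [show (i:ℤ)+1-1 = (i:ℤ) by ring]
    have hB : (∑ i ∈ Finset.range (j+3), E s (j+1) ((i:ℤ)+1) * chV (i:ℤ) x)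
        = ∑ i ∈ Finset.range (j+2), E s (j+1) (i:ℤ) * chV ((i:ℤ)-1) x := by
      rw [Finset.sum_range_succ, Finset.sum_range_succ,
        E_vanish s (j+1) (((j+2:ℕ):ℤ)+1) (by push_cast; omega),
        E_vanish s (j+1) (((j+1:ℕ):ℤ)+1) (by push_cast; omega),
        zero_mul, add_zero, zero_mul, add_zero, hB2]
    have hC : (∑ i ∈ Finset.range (j+3), E s (j+1) (i:ℤ) * chV (i:ℤ) x)
        = ∑ i ∈ Finset.range (j+2), E s (j+1) (i:ℤ) * chV (i:ℤ) x := by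
      rw [Finset.sum_range_succ,
        E_vanish s (j+1) ((j+2:ℕ):ℤ) (by push_cast; omega), zero_mul, add_zero]
    have hD : (∑ i ∈ Finset.range (j+3), E s j (i:ℤ) * chV (i:ℤ) x)
        = ∑ i ∈ Finset.range (j+1), E s j (i:ℤ) * chV (i:ℤ) x := by
      rw [Finset.sum_range_succ, Finset.sum_range_succ,
        E_vanish s j ((j+2:ℕ):ℤ) (by push_cast; omega),
        E_vanish s j ((j+1:ℕ):ℤ) (by push_cast; omega),
        zero_mul, add_zero, zero_mul, add_zero]
    rw [hA, hB, hC, hD]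
    have hxs : (x+s) * ∑ i ∈ Finset.range (j+2), E s (j+1) (i:ℤ) * chV (i:ℤ) x
        = (∑ i ∈ Finset.range (j+2), E s (j+1) (i:ℤ) * chV ((i:ℤ)+1) x)
          + (∑ i ∈ Finset.range (j+2), E s (j+1) (i:ℤ) * chV ((i:ℤ)-1) x)
          + s * ∑ i ∈ Finset.range (j+2), E s (j+1) (i:ℤ) * chV (i:ℤ) x := by
      rw [Finset.mul_sum, Finset.mul_sum, ← Finset.sum_add_distrib,
        ← Finset.sum_add_distrib]
      refine Finset.sum_congr rfl fun i _ => ?_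
      have h := chV_rec (i:ℤ) x
      linear_combination (E s (j+1) (i:ℤ)) * h
    rw [hxs]

/-- For `s > 0` the shifted polynomial `x ↦ V_j(x + s)` expands in the basis `{V_i}`
with nonnegative coefficients, leading coefficient `1`, and positive constant coefficient
(when `j ≥ 1`). -/
theorem chebV_shift_expansion (s : ℝ) (hs : 0 < s) (j : ℕ) :
    ∃ ε : ℕ → ℝ,
      (∀ x : ℝ, chebV j (x + s) = ∑ i ∈ Finset.range (j + 1), ε i * chebV i x) ∧
      (∀ i ≤ j, 0 ≤ ε i) ∧
      ε j = 1 ∧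
      (1 ≤ j → 0 < ε 0) := by
  refine ⟨fun i => E s j (i : ℤ), ?_, ?_, ?_, ?_⟩
  · intro x
    have h := E_eval s j x
    simpa [chebV, chV] using h
  · intro i _
    exact (E_nonneg_dom s hs.le j).1 (i : ℤ)
  · exact E_diag s hs.le j
  · intro hj
    obtain ⟨k, rfl⟩ : ∃ k, j = k + 1 := ⟨j - 1, by omega⟩
    exact E_zero_pos s hs k
end

section
/- Let F(x) = Σ_{j=0}^{n} c_j V_j(x) with all c_j ≥ 0 and some c_j > 0 for j ≥ 1. Then for any s > 0, the shifted polynomial x ↦ F(x + s) equals Σ_{j=0}^{n} q_j(s) V_j(x) with all q_j(s) ≥ 0 and q_0(s) > 0. -/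
/-!
Here `V_j` is Mathlib's rescaled Chebyshev polynomial `S j`. Nonnegative combinations of
`V_0, …, V_n` form a pointed cone, which is stable under differentiation because
`V_{j+2}' = V_j' + (j + 2) V_{j+1}`, hence under all Hasse derivatives. Taylor's formula
`V_j(x + s) = ∑_k s^k (D^{(k)} V_j)(x)`, with `D^{(k)} = (1/k!) dᵏ/dxᵏ`, therefore puts
`V_j(x + s)` in the cone when `s ≥ 0`, and its top term is `s^j V_0` because `V_j` is monic of
degree `j`; this term makes the `V_0`-coefficient of the shifted polynomial positive.
-/

open Real

open Polynomial Polynomial.Chebyshev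
open scoped Nat

section CommRing

variable (R : Type*) [CommRing R]

theorem derivative_S_add_two (n : ℕ) :
    derivative (S R (n + 2)) = derivative (S R n) + (n + 2) • S R (n + 1) := by
  induction n using Nat.twoStepInduction with
  | zero => simp [S_two]; ring
  | one =>
    have h : S R 3 = X * S R 2 - S R 1 := S_add_two R 1
    simp [h, S_two]
    ring
  | more n ih ih' =>
    push_cast at ih ih' ⊢
    have h₁ := congr_arg derivative (S_add_two R (n + 2))
    have h₂ := congr_arg derivative (S_add_two R n)
    have h₃ := S_add_two R (n + 1)
    simp only [derivative_sub, derivative_mul, derivative_X, one_mul] at h₁ h₂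
    ring_nf at *
    linear_combination h₁ + X * ih' - (n + 3 : R[X]) * h₃ - h₂ - ih

theorem natDegree_S_natCast [Nontrivial R] (n : ℕ) : (S R n).natDegree = n := by
  induction n using Nat.twoStepInduction with
  | zero => simp
  | one => simp
  | more n ih ih' =>
    push_cast at ih ih' ⊢
    have hne : S R (n + 1) ≠ 0 := fun h => by simp [h] at ih'
    have hX : (X * S R (n + 1)).natDegree = n + 2 := by rw [natDegree_X_mul hne, ih']
    rw [S_add_two, natDegree_sub_eq_left_of_natDegree_lt (by omega), hX]

theorem monic_S_natCast [Nontrivial R] (n : ℕ) : (S R n).Monic := by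
  induction n using Nat.twoStepInduction with
  | zero => simp
  | one => simp
  | more n _ ih =>
    push_cast at ih ⊢
    have hn := natDegree_S_natCast R n
    have hn' := natDegree_S_natCast R (n + 1)
    push_cast at hn'
    rw [S_add_two]
    refine (monic_X.mul ih).sub_of_left (degree_lt_degree ?_)
    rw [natDegree_X_mul ih.ne_zero, hn, hn']
    omega

theorem hasseDeriv_S_natCast_self [Nontrivial R] (n : ℕ) : hasseDeriv n (S R n) = 1 := by
  simpa [natDegree_S_natCast, (monic_S_natCast R n).leadingCoeff] using
    hasseDeriv_natDegree_eq_C (f := S R n)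

variable {R}

theorem eval_add_eq_sum_hasseDeriv (f : R[X]) (x s : R) :
    f.eval (x + s) = ∑ k ∈ Finset.range (f.natDegree + 1), s ^ k * (hasseDeriv k f).eval x := by
  rw [add_comm, ← taylor_eval, eval_eq_sum_range, natDegree_taylor]
  simp only [taylor_coeff, mul_comm]

end CommRing

theorem chebV_eq_eval_S (m : ℕ) (x : ℝ) : chebV m x = (S ℝ m).eval x := by
  rw [chebV, S_eq_U_comp_half_mul_X, eval_comp]
  simp [div_eq_inv_mul]

noncomputable def chebCone (n : ℕ) : PointedCone ℝ ℝ[X] :=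
  PointedCone.hull ℝ ((fun k : ℕ => S ℝ k) '' Set.Iic n)

theorem S_mem_chebCone {k n : ℕ} (h : k ≤ n) : S ℝ k ∈ chebCone n :=
  Submodule.subset_span ⟨k, h, rfl⟩

theorem chebCone_mono : Monotone chebCone := fun _ _ h =>
  Submodule.span_mono (Set.image_mono (Set.Iic_subset_Iic.2 h))

theorem derivative_S_mem_chebCone (n : ℕ) : derivative (S ℝ n) ∈ chebCone n := by
  induction n using Nat.twoStepInduction with
  | zero => simp
  | one => simpa using S_mem_chebCone (k := 0) (n := 1) zero_le_one
  | more n ih _ =>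
    push_cast
    rw [derivative_S_add_two]
    refine add_mem (chebCone_mono (by omega) ih) ?_
    exact_mod_cast nsmul_mem (S_mem_chebCone (k := n + 1) (by omega)) _

theorem derivative_mem_chebCone {n : ℕ} {p : ℝ[X]} (hp : p ∈ chebCone n) :
    derivative p ∈ chebCone n := by
  have : chebCone n ≤ PointedCone.comap derivative (chebCone n) := by
    refine Submodule.span_le.2 ?_
    rintro _ ⟨k, hk, rfl⟩
    exact chebCone_mono hk (derivative_S_mem_chebCone k)
  exact this hp

theorem hasseDeriv_mem_chebCone {n : ℕ} (k : ℕ) {p : ℝ[X]} (hp : p ∈ chebCone n) :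
    hasseDeriv k p ∈ chebCone n := by
  have hiter : derivative^[k] p ∈ chebCone n := by
    induction k with
    | zero => exact hp
    | succ k ih => rw [Function.iterate_succ_apply']; exact derivative_mem_chebCone ih
  have h := congr_fun (factorial_smul_hasseDeriv (R := ℝ) (k := k)) p
  have : hasseDeriv k p = ((k ! : ℝ)⁻¹) • derivative^[k] p := by
    rw [← h, LinearMap.smul_apply, ← Nat.cast_smul_eq_nsmul ℝ, smul_smul,
      inv_mul_cancel₀ (by positivity), one_smul]
  rw [this]
  exact (chebCone n).smul_mem (by positivity) hiter

theorem exists_mem_chebCone_eval_S_add_eq (j : ℕ) {s : ℝ} (hs : 0 ≤ s) :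
    ∃ p ∈ chebCone j, ∀ x, (S ℝ j).eval (x + s) = s ^ j + p.eval x := by
  refine ⟨∑ k ∈ Finset.range j, s ^ k • hasseDeriv k (S ℝ j), ?_, fun x => ?_⟩
  · exact Submodule.sum_mem _ fun k _ =>
      (chebCone j).smul_mem (pow_nonneg hs k) (hasseDeriv_mem_chebCone k (S_mem_chebCone le_rfl))
  · rw [eval_add_eq_sum_hasseDeriv, natDegree_S_natCast, Finset.sum_range_succ,
      hasseDeriv_S_natCast_self, eval_finsetSum]
    simp only [eval_one, mul_one, eval_smul, smul_eq_mul]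
    ring

theorem exists_nonneg_coeffs_of_mem_chebCone {n : ℕ} {p : ℝ[X]} (hp : p ∈ chebCone n) :
    ∃ q : ℕ → ℝ, (∀ k, 0 ≤ q k) ∧
      p = ∑ k ∈ Finset.range (n + 1), q k • S ℝ k := by
  induction hp using Submodule.span_induction with
  | mem _ h =>
    obtain ⟨k, hk, rfl⟩ := h
    refine ⟨Pi.single k 1, fun i => ?_, ?_⟩
    · by_cases hi : i = k <;> simp [hi]
    · simp [Pi.single_apply, Set.mem_Iic.1 hk]
  | zero => exact ⟨0, fun _ => le_rfl, by simp⟩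
  | add _ _ _ _ hp hq =>
    obtain ⟨q, hq₀, rfl⟩ := hp
    obtain ⟨q', hq'₀, rfl⟩ := hq
    exact ⟨q + q', fun k => add_nonneg (hq₀ k) (hq'₀ k),
      by simp [add_smul, Finset.sum_add_distrib]⟩
  | smul c _ _ hp =>
    obtain ⟨q, hq₀, rfl⟩ := hp
    refine ⟨fun k => c * q k, fun k => mul_nonneg c.2 (hq₀ k), ?_⟩
    rw [Finset.smul_sum]
    exact Finset.sum_congr rfl fun k _ => by rw [Nonneg.mk_smul, smul_smul]

/-- If `F = ∑_{j=0}^n c_j V_j` with all `c_j ≥ 0` and some `c_j > 0` with `j ≥ 1`, then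
for any `s > 0` the shifted polynomial `x ↦ F(x + s)` equals `∑_{j=0}^n q_j(s) V_j(x)`
with all `q_j(s) ≥ 0` and `q_0(s) > 0`. -/
theorem cheb_shift_positive_coeffs (n : ℕ) (c : ℕ → ℝ)
    (hc : ∀ j ≤ n, 0 ≤ c j) (hpos : ∃ j, 1 ≤ j ∧ j ≤ n ∧ 0 < c j)
    (s : ℝ) (hs : 0 < s) :
    ∃ q : ℕ → ℝ,
      (∀ x : ℝ, ∑ j ∈ Finset.range (n + 1), c j * chebV j (x + s) =
          ∑ j ∈ Finset.range (n + 1), q j * chebV j x) ∧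
      (∀ j ≤ n, 0 ≤ q j) ∧
      0 < q 0 := by
  choose p hp hshift using fun j => exists_mem_chebCone_eval_S_add_eq j hs.le
  have hc' : ∀ j ∈ Finset.range (n + 1), 0 ≤ c j := fun j hj =>
    hc j (Finset.mem_range_succ_iff.1 hj)
  have hG : ∑ j ∈ Finset.range (n + 1), c j • p j ∈ chebCone n :=
    Submodule.sum_mem _ fun j hj =>
      (chebCone n).smul_mem (hc' j hj) (chebCone_mono (Finset.mem_range_succ_iff.1 hj) (hp j))
  obtain ⟨q, hq, hqG⟩ := exists_nonneg_coeffs_of_mem_chebCone hG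
  set A := ∑ j ∈ Finset.range (n + 1), c j * s ^ j
  have hA : 0 < A := by
    obtain ⟨j, -, hjn, hcj⟩ := hpos
    exact Finset.sum_pos' (fun j hj => mul_nonneg (hc' j hj) (pow_nonneg hs.le j))
      ⟨j, Finset.mem_range_succ_iff.2 hjn, mul_pos hcj (pow_pos hs j)⟩
  refine ⟨q + Pi.single 0 A, fun x => ?_, fun j _ => ?_,
    by simpa using add_pos_of_nonneg_of_pos (hq 0) hA⟩
  · have hqx := congr_arg (eval x) hqG
    simp only [eval_finsetSum, eval_smul, smul_eq_mul] at hqx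
    calc ∑ j ∈ Finset.range (n + 1), c j * chebV j (x + s)
        = A + ∑ j ∈ Finset.range (n + 1), c j * (p j).eval x := by
          simp only [chebV_eq_eval_S, hshift, mul_add, Finset.sum_add_distrib, A]
      _ = ∑ j ∈ Finset.range (n + 1), (q + Pi.single 0 A : ℕ → ℝ) j * chebV j x := by
          simp [hqx, chebV_eq_eval_S, add_mul, Finset.sum_add_distrib, Pi.single_apply, add_comm]
  · by_cases hj : j = 0 <;> simp [hj, hq, hA.le, add_nonneg]
end

section
/- Let ν be a probability measure on I = I_1 ∪ I_2 (intervals with disjoint interiors) such that ∫_I V_j dν ≥ 0 for all j ≥ 0. Suppose f = Σ_{j=0}^{n} c_j V_j with all c_j ≥ 0 and f ≤ 0 on I_1. Then ν(I_2) ≥ (c_0 − M_1)/(M_2 − M_1), where M_i = sup_{x ∈ I_i} f(x), provided M_2 > M_1. -/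
open MeasureTheory Set Real

/-! Since `V₀ = 1` and every `∫ V_j dν` is nonnegative, `∫ f dν ≥ c₀`. Splitting `I` into `I₁` and
`I₂ \ I₁` and bounding `f` by `M₁` and `M₂` there gives `c₀ ≤ M₁ (1 - p) + M₂ p` with `p = ν(I₂ \ I₁)`,
which is the bound after solving for `p`. -/

theorem continuous_chebV (j : ℕ) : Continuous (chebV j) :=
  (Polynomial.Chebyshev.U ℝ j).continuous.comp (continuous_id.div_const 2)

@[simp]
theorem chebV_zero (x : ℝ) : chebV 0 x = 1 := by
  simp [chebV]

theorem mul_measureReal_le_setIntegral_sum_chebV {ν : Measure ℝ} [IsFiniteMeasureOnCompacts ν]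
    {S : Set ℝ} (hS : IsCompact S) {n : ℕ} {co : ℕ → ℝ} (hco : ∀ j ≤ n, 0 ≤ co j)
    (hcheb : ∀ j ≤ n, 0 ≤ ∫ x in S, chebV j x ∂ν) :
    co 0 * ν.real S ≤ ∫ x in S, ∑ j ∈ Finset.range (n + 1), co j * chebV j x ∂ν := by
  rw [integral_finsetSum _ fun j _ =>
    ((continuous_chebV j).continuousOn.integrableOn_compact hS).const_mul _]
  simp_rw [integral_const_mul]
  calc co 0 * ν.real S = co 0 * ∫ x in S, chebV 0 x ∂ν := by simp
    _ ≤ ∑ j ∈ Finset.range (n + 1), co j * ∫ x in S, chebV j x ∂ν :=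
      Finset.single_le_sum (f := fun j => co j * ∫ x in S, chebV j x ∂ν)
        (fun j hj => have hjn := Finset.mem_range_succ_iff.mp hj
          mul_nonneg (hco j hjn) (hcheb j hjn))
        (Finset.mem_range.mpr n.succ_pos)

theorem ofReal_div_sub_le_of_le_setIntegral {α : Type*} [MeasurableSpace α] {μ : Measure α}
    {s t : Set α} {f : α → ℝ} {c M₁ M₂ : ℝ} (hst : Disjoint s t) (hs : MeasurableSet s)
    (ht : MeasurableSet t) (hμ : μ (s ∪ t) = 1) (hf : IntegrableOn f (s ∪ t) μ)
    (hf₁ : ∀ x ∈ s, f x ≤ M₁) (hf₂ : ∀ x ∈ t, f x ≤ M₂) (hM : M₁ < M₂)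
    (hc : c ≤ ∫ x in s ∪ t, f x ∂μ) :
    ENNReal.ofReal ((c - M₁) / (M₂ - M₁)) ≤ μ t := by
  have hfin : ∀ u ⊆ s ∪ t, μ u < ⊤ := fun u hu =>
    (measure_mono hu).trans_lt (hμ ▸ ENNReal.one_lt_top)
  have hsum : μ.real s + μ.real t = 1 := by
    rw [← measureReal_union hst ht (hfin s subset_union_left).ne (hfin t subset_union_right).ne,
      measureReal_def, hμ, ENNReal.toReal_one]
  have hint₁ : ∫ x in s, f x ∂μ ≤ M₁ * μ.real s := by
    simpa [mul_comm] using setIntegral_mono_on (hf.mono_set subset_union_left)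
      (integrableOn_const (hfin s subset_union_left).ne) hs hf₁
  have hint₂ : ∫ x in t, f x ∂μ ≤ M₂ * μ.real t := by
    simpa [mul_comm] using setIntegral_mono_on (hf.mono_set subset_union_right)
      (integrableOn_const (hfin t subset_union_right).ne) ht hf₂
  have hsplit : c ≤ M₁ * μ.real s + M₂ * μ.real t := by
    rw [setIntegral_union hst ht (hf.mono_set subset_union_left)
      (hf.mono_set subset_union_right)] at hc
    linarith
  rw [← ENNReal.ofReal_toReal (hfin t subset_union_right).ne]
  refine ENNReal.ofReal_le_ofReal ((div_le_iff₀ (sub_pos.mpr hM)).mpr ?_)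
  rw [← measureReal_def]
  linear_combination hsplit + M₁ * hsum

theorem measure_lower_bound_cheb_general (a b c : ℝ) (hab : a ≤ b) (hbc : b ≤ c)
    (ν : Measure ℝ) [IsProbabilityMeasure ν] (hν : ν (Icc a c) = 1)
    (hcheb : ∀ j : ℕ, 0 ≤ ∫ x in Icc a c, chebV j x ∂ν)
    (n : ℕ) (co : ℕ → ℝ) (hco : ∀ j ≤ n, 0 ≤ co j)
    (f : ℝ → ℝ) (hf : ∀ x, f x = ∑ j ∈ Finset.range (n + 1), co j * chebV j x)
    (M₁ M₂ : ℝ) (hM₁ : M₁ = sSup (f '' Icc a b)) (hM₂ : M₂ = sSup (f '' Icc b c))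
    (hM : M₁ < M₂) :
    ENNReal.ofReal ((co 0 - M₁) / (M₂ - M₁)) ≤ ν (Icc b c) := by
  obtain rfl : f = fun x => ∑ j ∈ Finset.range (n + 1), co j * chebV j x := funext hf
  have hcont : Continuous fun x => ∑ j ∈ Finset.range (n + 1), co j * chebV j x :=
    continuous_finsetSum _ fun j _ => continuous_const.mul (continuous_chebV j)
  have hunion : Icc a b ∪ Ioc b c = Icc a c := Icc_union_Ioc_eq_Icc hab hbc
  have hdisj : Disjoint (Icc a b) (Ioc b c) :=
    disjoint_left.mpr fun x hx₁ hx₂ => hx₂.1.not_ge hx₁.2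
  have hc₀ : co 0 ≤ ∫ x in Icc a c, ∑ j ∈ Finset.range (n + 1), co j * chebV j x ∂ν := by
    simpa [measureReal_def, hν] using
      mul_measureReal_le_setIntegral_sum_chebV isCompact_Icc hco fun j _ => hcheb j
  calc ENNReal.ofReal ((co 0 - M₁) / (M₂ - M₁)) ≤ ν (Ioc b c) :=
        ofReal_div_sub_le_of_le_setIntegral hdisj measurableSet_Icc measurableSet_Ioc
          (hunion ▸ hν) (hunion ▸ hcont.integrableOn_Icc)
          (fun x hx => hM₁ ▸ le_csSup (isCompact_Icc.bddAbove_image hcont.continuousOn)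
            (mem_image_of_mem _ hx))
          (fun x hx => hM₂ ▸ le_csSup (isCompact_Icc.bddAbove_image hcont.continuousOn)
            (mem_image_of_mem _ (Ioc_subset_Icc_self hx)))
          hM (hunion ▸ hc₀)
    _ ≤ ν (Icc b c) := measure_mono Ioc_subset_Icc_self

/-- Let `ν` be a Borel probability measure concentrated on `I = [a, c] = I₁ ∪ I₂`,
`I₁ = [a, b]`, `I₂ = [b, c]`, with `∫ V_j dν ≥ 0` for all `j`. If
`f = ∑_{j=0}^n c_j V_j` with all `c_j ≥ 0` and `f ≤ 0` on `I₁`, then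
`ν(I₂) ≥ (c₀ - M₁)/(M₂ - M₁)`, where `Mᵢ = sup_{Iᵢ} f`, provided `M₂ > M₁`. -/
theorem measure_lower_bound_cheb (a b c : ℝ) (hab : a ≤ b) (hbc : b ≤ c)
    (ν : Measure ℝ) [IsProbabilityMeasure ν] (hν : ν (Icc a c) = 1)
    (hcheb : ∀ j : ℕ, 0 ≤ ∫ x in Icc a c, chebV j x ∂ν)
    (n : ℕ) (co : ℕ → ℝ) (hco : ∀ j ≤ n, 0 ≤ co j)
    (f : ℝ → ℝ) (hf : ∀ x, f x = ∑ j ∈ Finset.range (n + 1), co j * chebV j x)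
    (hneg : ∀ x ∈ Icc a b, f x ≤ 0)
    (M₁ M₂ : ℝ) (hM₁ : M₁ = sSup (f '' Icc a b)) (hM₂ : M₂ = sSup (f '' Icc b c))
    (hM : M₁ < M₂) :
    ENNReal.ofReal ((co 0 - M₁) / (M₂ - M₁)) ≤ ν (Icc b c) :=
  measure_lower_bound_cheb_general a b c hab hbc ν hν hcheb n co hco f hf M₁ M₂ hM₁ hM₂ hM
end

section
/- If X is a finite connected k-regular graph with second largest adjacency eigenvalue μ_1(X) ≤ −1, then X is the complete graph on k + 1 vertices. -/
/-!
The adjacency matrix is symmetric with trace zero, so its eigenvalues sum to zero. Since the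
graph is connected and `k`-regular, its `k`-eigenvectors are the constant vectors, so `k` is a
simple eigenvalue and the other `n - 1` eigenvalues are at most `-1`. Hence `0 ≤ k - (n - 1)`,
i.e. `n ≤ k + 1`, while `k`-regularity forces `n ≥ k + 1`. A `k`-regular graph on `k + 1`
vertices is complete.
-/

def adjMat {V : Type*} [Fintype V] (G : SimpleGraph V) [DecidableRel G.Adj] :
    Matrix V V ℝ :=
  G.adjMatrix ℝ

def IsAdjEigenvalue {V : Type*} [Fintype V] (G : SimpleGraph V) [DecidableRel G.Adj]
    (μ : ℝ) : Prop :=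
  ∃ v : V → ℝ, v ≠ 0 ∧ (adjMat G).mulVec v = μ • v

open Finset Matrix

theorem Fintype.card_le_add_one_of_sum_eq_zero {ι : Type*} [Fintype ι] {f : ι → ℝ} {c : ℝ}
    (hc : 0 ≤ c + 1) (hsum : ∑ i, f i = 0) (hf : ∀ i, f i = c ∨ f i ≤ -1)
    (huniq : ∀ i j, f i = c → f j = c → i = j) : (Fintype.card ι : ℝ) ≤ c + 1 := by
  classical
  have hfilter : #{i | f i = c} ≤ 1 := card_le_one.2 fun i hi j hj ↦
    huniq i j (mem_filter.1 hi).2 (mem_filter.1 hj).2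
  calc (Fintype.card ι : ℝ) = ∑ i, (f i + 1) := by
        simp [sum_add_distrib, hsum]
    _ ≤ ∑ i, if f i = c then c + 1 else 0 := by
        refine sum_le_sum fun i _ ↦ ?_
        split_ifs with h
        · rw [h]
        · linarith [(hf i).resolve_left h]
    _ = #{i | f i = c} * (c + 1) := by
        rw [← sum_filter, sum_const, nsmul_eq_mul]
    _ ≤ 1 * (c + 1) := by gcongr; exact_mod_cast hfilter
    _ = c + 1 := one_mul _

theorem Orthonormal.eq_of_forall_apply_eq {ι V : Type*} [Fintype V] {v : ι → EuclideanSpace ℝ V}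
    (hv : Orthonormal ℝ v) {i j : ι} (hi : ∀ a b, v i a = v i b) (hj : ∀ a b, v j a = v j b) :
    i = j := by
  by_contra hij
  obtain ⟨a, hia⟩ : ∃ a, v i a ≠ 0 := by
    by_contra! h
    exact hv.ne_zero i (by ext a; exact h a)
  have hja : v j a ≠ 0 := fun h ↦ hv.ne_zero j (by ext b; rw [hj b a, h]; rfl)
  have hcard : (Fintype.card V : ℝ) ≠ 0 := by
    have : Nonempty V := ⟨a⟩
    exact_mod_cast Fintype.card_ne_zero
  have hinner : inner ℝ (v i) (v j) = Fintype.card V * (v i a * v j a) := by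
    simp [PiLp.inner_apply, hi _ a, hj _ a, mul_comm]
  rw [hv.2 hij] at hinner
  exact mul_ne_zero hcard (mul_ne_zero hia hja) hinner.symm

namespace SimpleGraph

variable {V : Type*} [Fintype V] {G : SimpleGraph V} [DecidableRel G.Adj] {k : ℕ}

theorem IsRegularOfDegree.apply_eq_of_adjMatrix_mulVec_eq [DecidableEq V]
    (hreg : G.IsRegularOfDegree k) (hconn : G.Connected)
    {x : V → ℝ} (hx : G.adjMatrix ℝ *ᵥ x = (k : ℝ) • x) (u w : V) : x u = x w := by
  have hlap : G.lapMatrix ℝ *ᵥ x = 0 := by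
    ext v
    rw [lapMatrix_mulVec_apply, ← adjMatrix_mulVec_apply, hx, hreg v]
    simp
  exact (lapMatrix_mulVec_eq_zero_iff_forall_reachable G).1 hlap u w (hconn.preconnected u w)

theorem IsRegularOfDegree.eq_top_of_card_eq (hreg : G.IsRegularOfDegree k)
    (hcard : Fintype.card V = k + 1) : G = ⊤ :=
  eq_top_iff_forall_isUniversal.2 fun v ↦ (G.degree_eq_card_sub_one v).1 (by simp [hreg v, hcard])

end SimpleGraph

theorem complete_of_mu_le_neg_one_general {V : Type*} [Fintype V] (G : SimpleGraph V) [DecidableRel G.Adj]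
    (k : ℕ) (hreg : G.IsRegularOfDegree k) (hconn : G.Connected)
    (hμ : ∀ μ : ℝ, IsAdjEigenvalue G μ → μ = k ∨ μ ≤ -1) :
    Nonempty (G ≃g (⊤ : SimpleGraph (Fin (k + 1)))) := by
  classical
  have hA : (adjMat G).IsHermitian := G.isHermitian_adjMatrix ℝ
  set b := hA.eigenvectorBasis
  have heig (i : V) : hA.eigenvalues i = k ∨ hA.eigenvalues i ≤ -1 :=
    hμ _ ⟨b i, fun h ↦ b.orthonormal.ne_zero i (by ext; exact congrFun h _),
      hA.mulVec_eigenvectorBasis i⟩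
  have hsimple (i j : V) (hi : hA.eigenvalues i = k) (hj : hA.eigenvalues j = k) : i = j :=
    b.orthonormal.eq_of_forall_apply_eq
      (hreg.apply_eq_of_adjMatrix_mulVec_eq hconn (hi ▸ hA.mulVec_eigenvectorBasis i))
      (hreg.apply_eq_of_adjMatrix_mulVec_eq hconn (hj ▸ hA.mulVec_eigenvectorBasis j))
  have hsum : ∑ i, hA.eigenvalues i = 0 := by
    simpa [adjMat] using hA.trace_eq_sum_eigenvalues.symm
  have hle : Fintype.card V ≤ k + 1 := by
    exact_mod_cast Fintype.card_le_add_one_of_sum_eq_zero (by positivity) hsum heig hsimple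
  obtain ⟨v⟩ := hconn.nonempty
  have hcard : Fintype.card V = k + 1 := le_antisymm hle (hreg v ▸ G.degree_lt_card_verts v)
  obtain rfl := hreg.eq_top_of_card_eq hcard
  exact ⟨.completeGraph (Fintype.equivFinOfCardEq hcard)⟩

/-- If `X` is a finite connected `k`-regular graph with second largest adjacency eigenvalue
`μ₁(X) ≤ -1`, then `X` is the complete graph on `k + 1` vertices. -/
theorem complete_of_mu_le_neg_one {V : Type*} [Fintype V] (G : SimpleGraph V) [DecidableRel G.Adj]
    (k : ℕ) (hk : 1 ≤ k) (hreg : G.IsRegularOfDegree k) (hconn : G.Connected)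
    (hμ : ∀ μ : ℝ, IsAdjEigenvalue G μ → μ = k ∨ μ ≤ -1) :
    Nonempty (G ≃g (⊤ : SimpleGraph (Fin (k + 1)))) :=
  complete_of_mu_le_neg_one_general G k hreg hconn hμ
end

section
/- If X is a finite connected k-regular graph with second largest adjacency eigenvalue μ_1(X) ≤ 0, then X has at most 2k + 2 vertices. -/
/-! Let `λ_i` be the adjacency eigenvalues. Since `tr A = 0` and `tr A² = nk`, the sum
`Σ λ_i (λ_i + k)` equals `nk`. The eigenvectors for `k` lie in the kernel of the Laplacian, which
is one-dimensional for a connected graph, so `k` occurs at most once and contributes at most `2k²`;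
every other eigenvalue lies in `[-k, 0]` and contributes a nonpositive term. Hence `nk ≤ 2k²`,
i.e. `n ≤ 2k`. -/

open Matrix Finset Module Module.End SimpleGraph

namespace Matrix.IsHermitian

variable {𝕜 : Type*} [RCLike 𝕜] {n : Type*} [Fintype n] [DecidableEq n] {A : Matrix n n 𝕜}

theorem trace_cfc_eq_sum (hA : A.IsHermitian) (f : ℝ → ℝ) :
    (cfc f A).trace = ∑ i, (f (hA.eigenvalues i) : 𝕜) := by
  rw [hA.cfc_eq, IsHermitian.cfc, Unitary.conjStarAlgAut_apply, trace_mul_cycle,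
    Unitary.coe_star_mul_self, one_mul, trace_diagonal]
  rfl

theorem card_eigenvalues_eq_le_finrank_eigenspace (hA : A.IsHermitian) (μ : ℝ) :
    #{i | hA.eigenvalues i = μ} ≤ finrank 𝕜 (eigenspace (toLin' A) (μ : 𝕜)) := by
  set S : Finset n := {i | hA.eigenvalues i = μ}
  let b : S → n → 𝕜 := fun i => hA.eigenvectorBasis i
  have hb : LinearIndependent 𝕜 b :=
    (hA.eigenvectorBasis.orthonormal.linearIndependent.comp _ Subtype.val_injective).map'
      (WithLp.linearEquiv 2 𝕜 (n → 𝕜)).toLinearMap (LinearEquiv.ker _)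
  have hspan : Submodule.span 𝕜 (Set.range b) ≤ eigenspace (toLin' A) (μ : 𝕜) := by
    rw [Submodule.span_le]
    rintro - ⟨⟨i, hi⟩, rfl⟩
    rw [SetLike.mem_coe, mem_eigenspace_iff, toLin'_apply, hA.mulVec_eigenvectorBasis,
      (Finset.mem_filter.mp hi).2, RCLike.real_smul_eq_coe_smul (K := 𝕜)]
  calc #S = finrank 𝕜 (Submodule.span 𝕜 (Set.range b)) := by
        rw [finrank_span_eq_card hb, Fintype.card_coe]
    _ ≤ _ := Submodule.finrank_mono hspan

end Matrix.IsHermitian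

theorem sum_mul_add_le_two_mul_sq {ι : Type*} [Fintype ι] [DecidableEq ι] {x : ι → ℝ}
    {c : ℝ} (hlow : ∀ i, -c ≤ x i) (hx : ∀ i, x i = c ∨ x i ≤ 0) (hcard : #{i | x i = c} ≤ 1) :
    ∑ i, x i * (x i + c) ≤ 2 * c ^ 2 := by
  calc ∑ i, x i * (x i + c) ≤ ∑ i, if x i = c then 2 * c ^ 2 else 0 := by
        refine sum_le_sum fun i _ => ?_
        split_ifs with h
        · exact le_of_eq (by rw [h]; ring)
        · nlinarith [hlow i, (hx i).resolve_left h]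
    _ = #{i | x i = c} * (2 * c ^ 2) := by
        rw [sum_ite, sum_const_zero, add_zero, sum_const, nsmul_eq_mul]
    _ ≤ 1 * (2 * c ^ 2) := by gcongr; exact_mod_cast hcard
    _ = 2 * c ^ 2 := one_mul _

namespace SimpleGraph

variable {V : Type*} [Fintype V] {G : SimpleGraph V} [DecidableRel G.Adj] {k : ℕ}

theorem IsRegularOfDegree.abs_le_of_isAdjEigenvalue (hreg : G.IsRegularOfDegree k) {μ : ℝ}
    (hμ : IsAdjEigenvalue G μ) : |μ| ≤ k := by
  obtain ⟨v, hv0, hv⟩ := hμ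
  rw [adjMat] at hv
  obtain ⟨x, hx⟩ := Function.ne_iff.mp hv0
  obtain ⟨i, -, hi⟩ := exists_max_image univ (fun x => |v x|) ⟨x, mem_univ x⟩
  have hvi : 0 < |v i| := (abs_pos.mpr hx).trans_le (hi x (mem_univ x))
  refine le_of_mul_le_mul_right ?_ hvi
  calc |μ| * |v i| = |∑ u ∈ G.neighborFinset i, v u| := by
        rw [← abs_mul, ← adjMatrix_mulVec_apply, hv, Pi.smul_apply, smul_eq_mul]
    _ ≤ ∑ u ∈ G.neighborFinset i, |v u| := abs_sum_le_sum_abs _ _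
    _ ≤ ∑ u ∈ G.neighborFinset i, |v i| := sum_le_sum fun u _ => hi u (mem_univ u)
    _ = k * |v i| := by rw [sum_const, card_neighborFinset_eq_degree, hreg i, nsmul_eq_mul]

theorem IsRegularOfDegree.trace_adjMatrix_mul_self {R : Type*} [NonAssocSemiring R]
    (hreg : G.IsRegularOfDegree k) :
    (G.adjMatrix R * G.adjMatrix R).trace = Fintype.card V * k := by
  simp only [Matrix.trace, diag_apply, adjMatrix_mul_self_apply_self, hreg _, sum_const,
    card_univ, nsmul_eq_mul]

theorem IsRegularOfDegree.eigenspace_adjMatrix_le_ker_lapMatrix [DecidableEq V]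
    (hreg : G.IsRegularOfDegree k) :
    eigenspace (toLin' (G.adjMatrix ℝ)) k ≤ LinearMap.ker (toLin' (G.lapMatrix ℝ)) := by
  intro v hv
  rw [mem_eigenspace_iff, toLin'_apply] at hv
  rw [LinearMap.mem_ker, toLin'_apply, lapMatrix, sub_mulVec, hv]
  ext x
  simp [degMatrix, mulVec_diagonal, hreg x]

theorem Connected.finrank_ker_lapMatrix [DecidableEq V] (hconn : G.Connected) :
    finrank ℝ (LinearMap.ker (toLin' (G.lapMatrix ℝ))) = 1 := by
  rw [← card_connectedComponent_eq_finrank_ker_toLin'_lapMatrix]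
  obtain ⟨v⟩ := hconn.nonempty
  have := hconn.preconnected.subsingleton_connectedComponent
  exact Fintype.card_eq_one_iff.mpr ⟨G.connectedComponentMk v, fun _ => Subsingleton.elim _ _⟩

theorem isAdjEigenvalue_eigenvalues [DecidableEq V] (hA : (G.adjMatrix ℝ).IsHermitian) (i : V) :
    IsAdjEigenvalue G (hA.eigenvalues i) :=
  ⟨_, (WithLp.linearEquiv 2 ℝ (V → ℝ)).map_ne_zero_iff.mpr
    (hA.eigenvectorBasis.orthonormal.ne_zero i), hA.mulVec_eigenvectorBasis i⟩

end SimpleGraph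

/-- If `X` is a finite connected `k`-regular graph with second largest adjacency eigenvalue
`μ₁(X) ≤ 0`, then `X` has at most `2k + 2` vertices. -/
theorem vertex_bound_mu_le_zero {V : Type*} [Fintype V] (G : SimpleGraph V) [DecidableRel G.Adj]
    (k : ℕ) (hk : 1 ≤ k) (hreg : G.IsRegularOfDegree k) (hconn : G.Connected)
    (hμ : ∀ μ : ℝ, IsAdjEigenvalue G μ → μ = k ∨ μ ≤ 0) :
    Fintype.card V ≤ 2 * k + 2 := by
  classical
  set A := G.adjMatrix ℝ
  have hA : A.IsHermitian := G.isHermitian_adjMatrix ℝ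
  set eig := hA.eigenvalues
  have hlow : ∀ i, -(k : ℝ) ≤ eig i := fun i =>
    (abs_le.mp (hreg.abs_le_of_isAdjEigenvalue (isAdjEigenvalue_eigenvalues hA i))).1
  have hcard : #{i | eig i = k} ≤ 1 := calc
    _ ≤ finrank ℝ (eigenspace (toLin' A) k) := hA.card_eigenvalues_eq_le_finrank_eigenspace k
    _ ≤ finrank ℝ (LinearMap.ker (toLin' (G.lapMatrix ℝ))) :=
      Submodule.finrank_mono hreg.eigenspace_adjMatrix_le_ker_lapMatrix
    _ = 1 := hconn.finrank_ker_lapMatrix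
  have hsum : ∑ i, eig i = 0 := by
    simpa [A, trace_adjMatrix] using hA.trace_eq_sum_eigenvalues.symm
  have hsq : ∑ i, eig i ^ 2 = Fintype.card V * k := by
    rw [← hreg.trace_adjMatrix_mul_self, ← sq, ← cfc_pow_id (R := ℝ) A 2 hA.isSelfAdjoint,
      hA.trace_cfc_eq_sum]
    rfl
  have hbound : ∑ i, eig i * (eig i + k) ≤ 2 * (k : ℝ) ^ 2 :=
    sum_mul_add_le_two_mul_sq hlow (fun i => hμ _ (isAdjEigenvalue_eigenvalues hA i)) hcard
  have htrace : ∑ i, eig i * (eig i + k) = Fintype.card V * k := by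
    simp only [mul_add, sum_add_distrib, ← sq, ← sum_mul, hsq, hsum, zero_mul, add_zero]
  have hk_pos : (0 : ℝ) < k := by exact_mod_cast hk
  have hnk : (Fintype.card V : ℝ) * k ≤ 2 * k * k := by nlinarith
  have : Fintype.card V ≤ 2 * k := by exact_mod_cast le_of_mul_le_mul_right hnk hk_pos
  omega
end

section
/- Let X be a finite connected k-regular graph on n vertices with adjacency eigenvalues μ_0, ..., μ_{n−1}. Then for every nonnegative integer m, (k−1)^{m/2} · Σ_{j=0}^{n−1} U_m(μ_j / (2√(k−1))) ≥ 0, where U_m is the m-th Chebyshev polynomial of the second kind. -/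
/-!
Write `A` for the adjacency matrix and `q = √(k - 1)`. The functions
`x ↦ q ^ m U_m (x / 2q)` obey the recurrence `p_{m+2}(x) = x p_{m+1}(x) - (k - 1) p_m(x)`, so the
matrices `M_m = q ^ m U_m (A / 2q)` obey `M_{m+2} = A M_{m+1} - (k - 1) M_m` with `M_0 = 1`,
`M_1 = A`, and the sum in the theorem is the trace of `M_m`.

Counting non-backtracking walks through the Hashimoto matrix `B` on arcs shows that
`M_{m+2} - M_m` is the matrix of non-backtracking walks of length `m + 2`: with `S` and `H`
the tail and head incidence matrices of the arcs, `A S = S B + H` and, by `k`-regularity,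
`H B = (k - 1) S` and `H Hᵀ = k`, so `S B^(m+1) Hᵀ` satisfies the same recurrence as
`M_{m+2} - M_m`. Hence every `M_m` has nonnegative entries, and so has nonnegative trace.
-/

open Matrix Finset Polynomial

theorem eq_of_linear_recurrence {R S : Type*} [Ring R] [SMul S R] {a : R} {c : S} {x y : ℕ → R}
    (hx : ∀ m, x (m + 2) = a * x (m + 1) - c • x m)
    (hy : ∀ m, y (m + 2) = a * y (m + 1) - c • y m) (h0 : x 0 = y 0) (h1 : x 1 = y 1) :
    x = y := by
  funext m
  induction m using Nat.twoStepInduction with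
  | zero => exact h0
  | one => exact h1
  | more m ihm ihm1 => rw [hx, hy, ihm, ihm1]

theorem Matrix.mul_apply_nonneg {l m n R : Type*} [Fintype m] [Semiring R] [PartialOrder R]
    [IsOrderedRing R] {A : Matrix l m R} {B : Matrix m n R} (hA : ∀ i j, 0 ≤ A i j)
    (hB : ∀ i j, 0 ≤ B i j) : ∀ i j, 0 ≤ (A * B) i j :=
  fun i j => sum_nonneg fun x _ => mul_nonneg (hA i x) (hB x j)

namespace SimpleGraph

variable {V : Type*} (R : Type*) [Fintype V] [DecidableEq V] (G : SimpleGraph V)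
  [DecidableRel G.Adj]

section

variable [Zero R] [One R]

/-- Arcs are indexed by all of `V × V`; the rows and columns of non-arcs vanish. -/
def tailMatrix : Matrix V (V × V) R := of fun i p => if p.1 = i ∧ G.Adj p.1 p.2 then 1 else 0

def headMatrix : Matrix V (V × V) R := of fun i p => if p.2 = i ∧ G.Adj p.1 p.2 then 1 else 0

def nonbacktrackingMatrix : Matrix (V × V) (V × V) R :=
  of fun p q => if G.Adj p.1 p.2 ∧ p.2 = q.1 ∧ G.Adj q.1 q.2 ∧ q.2 ≠ p.1 then 1 else 0

end

variable [CommRing R]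

theorem tailMatrix_mul_headMatrix_transpose :
    G.tailMatrix R * (G.headMatrix R)ᵀ = G.adjMatrix R := by
  ext i j
  rw [mul_apply, Fintype.sum_eq_single (i, j)]
  · by_cases hij : G.Adj i j <;> simp [tailMatrix, headMatrix, hij]
  · rintro ⟨a, b⟩ hab
    simp only [tailMatrix, headMatrix, of_apply, transpose_apply, mul_ite, mul_one, mul_zero]
    aesop

theorem adjMatrix_mul_tailMatrix :
    G.adjMatrix R * G.tailMatrix R =
      G.tailMatrix R * G.nonbacktrackingMatrix R + G.headMatrix R := by
  ext i ⟨c, d⟩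
  rw [Matrix.add_apply, mul_apply, mul_apply, Fintype.sum_eq_single c,
    Fintype.sum_eq_single (i, c)]
  · by_cases hcd : G.Adj c d <;> by_cases hdi : d = i <;> by_cases hic : G.Adj i c <;>
      simp [tailMatrix, headMatrix, nonbacktrackingMatrix, hcd, hdi, hic, G.adj_comm]
  · rintro ⟨a, b⟩ hab
    simp only [tailMatrix, nonbacktrackingMatrix, of_apply, mul_ite, mul_one, mul_zero]
    aesop
  · intro a hac
    simp [tailMatrix, Ne.symm hac]

theorem tailMatrix_mul_nonbacktrackingMatrix :
    G.tailMatrix R * G.nonbacktrackingMatrix R =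
      G.adjMatrix R * G.tailMatrix R - G.headMatrix R := by
  rw [adjMatrix_mul_tailMatrix]
  abel

theorem headMatrix_mul_headMatrix_transpose :
    G.headMatrix R * (G.headMatrix R)ᵀ = diagonal fun v => (G.degree v : R) := by
  ext i j
  rw [mul_apply, Fintype.sum_prod_type_right, Fintype.sum_eq_single i]
  · by_cases hij : i = j
    · subst hij
      simp +contextual [headMatrix, sum_boole, ← card_neighborFinset_eq_degree,
        neighborFinset_eq_filter, G.adj_comm]
    · simp [headMatrix, hij]
  · intro b hb
    simp [headMatrix, hb]

theorem cast_card_filter_adj_ne {v w : V} (h : G.Adj v w) :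
    (#{u | G.Adj u v ∧ u ≠ w} : R) = G.degree v - 1 := by
  have : ({u | G.Adj u v ∧ u ≠ w} : Finset V) = (G.neighborFinset v).erase w := by
    ext u
    simp [G.adj_comm, and_comm]
  rw [this, ← card_neighborFinset_eq_degree, card_erase_of_mem (by simpa using h),
    Nat.cast_sub (card_pos.mpr ⟨w, by simpa using h⟩), Nat.cast_one]

theorem headMatrix_mul_nonbacktrackingMatrix :
    G.headMatrix R * G.nonbacktrackingMatrix R =
      diagonal (fun v => (G.degree v : R) - 1) * G.tailMatrix R := by
  ext i ⟨c, d⟩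
  rw [mul_apply, Fintype.sum_prod_type_right, Fintype.sum_eq_single i, diagonal_mul]
  · by_cases hci : c = i
    · subst hci
      by_cases hcd : G.Adj c d
      · simp +contextual [headMatrix, nonbacktrackingMatrix, tailMatrix, hcd, sum_boole,
          eq_comm (a := d), ← G.cast_card_filter_adj_ne R hcd]
      · simp [headMatrix, nonbacktrackingMatrix, tailMatrix, hcd]
    · simp [headMatrix, nonbacktrackingMatrix, tailMatrix, hci, Ne.symm hci]
  · intro b hb
    simp [headMatrix, hb]

namespace IsRegularOfDegree

variable {R G} {k : ℕ} (hG : G.IsRegularOfDegree k)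
include hG

theorem headMatrix_mul_headMatrix_transpose :
    G.headMatrix R * (G.headMatrix R)ᵀ = (k : R) • 1 := by
  simp [SimpleGraph.headMatrix_mul_headMatrix_transpose, smul_one_eq_diagonal, hG.degree_eq]

theorem headMatrix_mul_nonbacktrackingMatrix :
    G.headMatrix R * G.nonbacktrackingMatrix R = ((k : R) - 1) • G.tailMatrix R := by
  simp [SimpleGraph.headMatrix_mul_nonbacktrackingMatrix, ← smul_one_eq_diagonal, hG.degree_eq]

theorem tailMatrix_mul_nonbacktrackingMatrix_pow_add_two (m : ℕ) :
    G.tailMatrix R * G.nonbacktrackingMatrix R ^ (m + 2) =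
      G.adjMatrix R * (G.tailMatrix R * G.nonbacktrackingMatrix R ^ (m + 1)) -
        ((k : R) - 1) • (G.tailMatrix R * G.nonbacktrackingMatrix R ^ m) := by
  rw [pow_succ' _ (m + 1), ← Matrix.mul_assoc, tailMatrix_mul_nonbacktrackingMatrix,
    Matrix.sub_mul, pow_succ', ← Matrix.mul_assoc (G.headMatrix R),
    hG.headMatrix_mul_nonbacktrackingMatrix, Matrix.smul_mul, Matrix.mul_assoc]

theorem eq_add_nonbacktracking_of_recurrence {M : ℕ → Matrix V V R} (h0 : M 0 = 1)
    (h1 : M 1 = G.adjMatrix R)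
    (hM : ∀ m, M (m + 2) = G.adjMatrix R * M (m + 1) - ((k : R) - 1) • M m) (m : ℕ) :
    M (m + 2) =
      M m + G.tailMatrix R * G.nonbacktrackingMatrix R ^ (m + 1) * (G.headMatrix R)ᵀ := by
  set W : ℕ → Matrix V V R :=
    fun m => G.tailMatrix R * G.nonbacktrackingMatrix R ^ m * (G.headMatrix R)ᵀ
  have hW : ∀ m, W (m + 2) = G.adjMatrix R * W (m + 1) - ((k : R) - 1) • W m := fun m => by
    simp only [W]
    rw [hG.tailMatrix_mul_nonbacktrackingMatrix_pow_add_two, Matrix.sub_mul, Matrix.smul_mul,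
      Matrix.mul_assoc (G.adjMatrix R)]
  have hW0 : W 0 = G.adjMatrix R := by
    simp [W, tailMatrix_mul_headMatrix_transpose]
  have hW1 : W 1 = G.adjMatrix R * G.adjMatrix R - (k : R) • 1 := by
    simp only [W, pow_one]
    rw [tailMatrix_mul_nonbacktrackingMatrix, Matrix.sub_mul, Matrix.mul_assoc,
      tailMatrix_mul_headMatrix_transpose, hG.headMatrix_mul_headMatrix_transpose]
  have hdiff := eq_of_linear_recurrence (x := fun m => M (m + 2) - M m) (y := fun m => W (m + 1))
    (fun m => by
      rw [show m + 1 + 2 = m + 2 + 1 from rfl, hM (m + 2), hM m]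
      simp only [mul_sub, smul_sub]
      abel)
    (fun m => hW (m + 1))
    (by
      simp only [hM 0, h0, h1, hW1, sub_smul, one_smul]
      abel)
    (by
      simp only [hM 1, hM 0, h0, h1, hW 0, hW0, hW1, mul_sub, Matrix.mul_smul, mul_one,
        sub_smul, one_smul]
      abel)
  exact eq_add_of_sub_eq' (congrFun hdiff m)

theorem apply_nonneg_of_recurrence [PartialOrder R] [IsOrderedRing R] {M : ℕ → Matrix V V R}
    (h0 : M 0 = 1) (h1 : M 1 = G.adjMatrix R)
    (hM : ∀ m, M (m + 2) = G.adjMatrix R * M (m + 1) - ((k : R) - 1) • M m) (m : ℕ) :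
    ∀ i j, 0 ≤ M m i j := by
  have hS : ∀ i p, 0 ≤ G.tailMatrix R i p := fun _ _ => ite_nonneg zero_le_one le_rfl
  have hH : ∀ p i, 0 ≤ (G.headMatrix R)ᵀ p i := fun _ _ => ite_nonneg zero_le_one le_rfl
  have hB : ∀ p p', 0 ≤ G.nonbacktrackingMatrix R p p' :=
    fun _ _ => ite_nonneg zero_le_one le_rfl
  induction m using Nat.twoStepInduction with
  | zero => intro i j; rw [h0, one_apply]; exact ite_nonneg zero_le_one le_rfl
  | one => intro i j; rw [h1, adjMatrix_apply]; exact ite_nonneg zero_le_one le_rfl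
  | more m ihm _ =>
    intro i j
    rw [hG.eq_add_nonbacktracking_of_recurrence h0 h1 hM, Matrix.add_apply]
    exact add_nonneg (ihm i j) (mul_apply_nonneg (mul_apply_nonneg hS
      (pow_apply_nonneg hB _)) hH i j)

end IsRegularOfDegree

end SimpleGraph

noncomputable def scaledChebyshevU {K : Type*} [Field K] (q : K) (m : ℕ) (x : K) : K :=
  q ^ m * (Chebyshev.U K m).eval (x / (2 * q))

@[fun_prop]
theorem continuous_scaledChebyshevU (q : ℝ) (m : ℕ) : Continuous (scaledChebyshevU q m) := by
  unfold scaledChebyshevU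
  fun_prop

theorem scaledChebyshevU_zero {K : Type*} [Field K] (q : K) : scaledChebyshevU q 0 = 1 := by
  ext x
  simp [scaledChebyshevU]

theorem scaledChebyshevU_one {K : Type*} [Field K] [NeZero (2 : K)] {q : K} (hq : q ≠ 0) :
    scaledChebyshevU q 1 = id := by
  ext x
  simp only [scaledChebyshevU, pow_one, Nat.cast_one, Chebyshev.U_one, eval_mul, eval_ofNat,
    eval_X, id_eq]
  field_simp

theorem scaledChebyshevU_add_two {K : Type*} [Field K] [NeZero (2 : K)] {q : K} (hq : q ≠ 0)
    (m : ℕ) (x : K) :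
    scaledChebyshevU q (m + 2) x =
      x * scaledChebyshevU q (m + 1) x - q ^ 2 * scaledChebyshevU q m x := by
  simp only [scaledChebyshevU]
  rw [show ((m + 2 : ℕ) : ℤ) = m + 2 by push_cast; ring,
    show ((m + 1 : ℕ) : ℤ) = m + 1 by push_cast; ring, Chebyshev.U_add_two]
  simp only [eval_sub, eval_mul, eval_ofNat, eval_X]
  field_simp
  ring

theorem cfc_scaledChebyshevU_add_two {A : Type*} [Ring A] [StarRing A] [Algebra ℝ A]
    [TopologicalSpace A] [ContinuousFunctionalCalculus ℝ A IsSelfAdjoint] {a : A}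
    (ha : IsSelfAdjoint a) {q : ℝ} (hq : q ≠ 0) (m : ℕ) :
    cfc (scaledChebyshevU q (m + 2)) a =
      a * cfc (scaledChebyshevU q (m + 1)) a - q ^ 2 • cfc (scaledChebyshevU q m) a := by
  rw [funext (scaledChebyshevU_add_two hq m),
    cfc_sub (fun x => x * scaledChebyshevU q (m + 1) x) (fun x => q ^ 2 * scaledChebyshevU q m x),
    cfc_mul (fun x => x) (scaledChebyshevU q (m + 1)), cfc_const_mul _ (scaledChebyshevU q m),
    cfc_id' ℝ a]

theorem Matrix.IsHermitian.trace_cfc {𝕜 n : Type*} [RCLike 𝕜] [Fintype n] [DecidableEq n]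
    {A : Matrix n n 𝕜} (hA : A.IsHermitian) (f : ℝ → ℝ) :
    (cfc f A).trace = ∑ i, (f (hA.eigenvalues i) : 𝕜) := by
  rw [hA.cfc_eq, IsHermitian.cfc, Unitary.conjStarAlgAut_apply, trace_mul_cycle,
    Unitary.coe_star_mul_self, Matrix.one_mul, trace_diagonal]
  rfl

theorem trace_formula_inequality_general (n : ℕ) (G : SimpleGraph (Fin n))
    [DecidableRel G.Adj] (k : ℕ) (hk : 2 ≤ k)
    (hreg : G.IsRegularOfDegree k)
    (hA : (G.adjMatrix ℝ).IsHermitian) (m : ℕ) :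
    0 ≤ Real.sqrt (k - 1) ^ m *
        ∑ j : Fin n, (Polynomial.Chebyshev.U ℝ m).eval
          (hA.eigenvalues j / (2 * Real.sqrt (k - 1))) := by
  have hk1 : (0 : ℝ) < k - 1 := by
    have : (2 : ℝ) ≤ k := by exact_mod_cast hk
    linarith
  set q := Real.sqrt (k - 1)
  have hq : q ≠ 0 := (Real.sqrt_pos.mpr hk1).ne'
  have hq2 : q ^ 2 = k - 1 := Real.sq_sqrt hk1.le
  have hM := hreg.apply_nonneg_of_recurrence
    (M := fun m => cfc (scaledChebyshevU q m) (G.adjMatrix ℝ))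
    (by simp only [scaledChebyshevU_zero]; exact cfc_one ℝ _ hA.isSelfAdjoint)
    (by simp only [scaledChebyshevU_one hq]; exact cfc_id ℝ _ hA.isSelfAdjoint)
    (fun m => by simp only [cfc_scaledChebyshevU_add_two hA.isSelfAdjoint hq, hq2])
  calc 0 ≤ (cfc (scaledChebyshevU q m) (G.adjMatrix ℝ)).trace :=
        sum_nonneg fun i _ => hM m i i
    _ = _ := by simp [hA.trace_cfc, scaledChebyshevU, mul_sum]

/-- The trace formula inequality: for a finite connected `k`-regular graph on `n` vertices
with adjacency eigenvalues `μ_0, …, μ_{n-1}`, for every `m ≥ 0`,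
`(k-1)^{m/2} ∑_j U_m(μ_j / (2√(k-1))) ≥ 0`. -/
theorem trace_formula_inequality (n : ℕ) (G : SimpleGraph (Fin n))
    [DecidableRel G.Adj] (k : ℕ) (hk : 2 ≤ k)
    (hreg : G.IsRegularOfDegree k) (hconn : G.Connected)
    (hA : (G.adjMatrix ℝ).IsHermitian) (m : ℕ) :
    0 ≤ Real.sqrt (k - 1) ^ m *
        ∑ j : Fin n, (Polynomial.Chebyshev.U ℝ m).eval
          (hA.eigenvalues j / (2 * Real.sqrt (k - 1))) :=
  trace_formula_inequality_general n G k hk hreg hA m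
end
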